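/- Let f ∈ L¹(ℝ) be a measurable function with f(z) = f(−1/z) for almost every z ≠ 0, and let f̃(k) = f(z₊(k)) with z₊(k) = (k + √(k² + 4))/2 (so f̃ ∈ L¹(ℝ)). Then for every y ∈ ℝ, ∫_ℝ f(z) e^{−(i/2)(z − 1/z) y} dz = ∫_ℝ f̃(k) e^{−(i/2) k y} dk. -/

import Mathlib

open MeasureTheory Filter Set
open scoped Topology ENNReal

noncomputable section

/-- `z₊(k) = (k + √(k² + 4))/2`, the positive solution of `z - 1/z = k`. -/
def zplus (k : ℝ) : ℝ := (k + Real.sqrt (k ^ 2 + 4)) / 2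

/-!
Split `ℝ` at `0`. The substitution `z = -1/w`, `w > 0`, parametrizes `(-∞, 0)` with Jacobian `1/w²`,
and the symmetry `g(-1/w) = g(w)` turns `∫_{z<0} g` into `∫_{w>0} g(w)/w²`. Hence
`∫_ℝ g = ∫_{w>0} (1 + 1/w²) g(w) dw`, and `1 + 1/w²` is the Jacobian of `k = w - 1/w`, a bijection
of `(0, ∞)` onto `ℝ` with inverse `z₊`. The oscillatory factor depends on `z` only through
`z - 1/z`, so it is itself invariant under `z ↦ -1/z`.
-/

lemma zplus_pos (k : ℝ) : 0 < zplus k := by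
  have : |k| < Real.sqrt (k ^ 2 + 4) := by
    rw [Real.lt_sqrt (abs_nonneg k), sq_abs]
    linarith
  unfold zplus
  linarith [neg_le_abs k]

lemma zplus_sub_inv (k : ℝ) : zplus k - (zplus k)⁻¹ = k := by
  have hsq : Real.sqrt (k ^ 2 + 4) ^ 2 = k ^ 2 + 4 := Real.sq_sqrt (by positivity)
  have hmul : zplus k * (zplus k - k) = 1 := by
    unfold zplus
    linear_combination hsq / 4
  rw [inv_eq_of_mul_eq_one_right hmul]
  ring

lemma strictMonoOn_sub_inv : StrictMonoOn (fun w : ℝ => w - w⁻¹) (Ioi 0) :=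
  fun _ ha _ _ hab => sub_lt_sub hab (inv_strictAntiOn ha (mem_Ioi.mpr (ha.out.trans hab)) hab)

lemma zplus_sub_inv_of_pos {w : ℝ} (hw : 0 < w) : zplus (w - w⁻¹) = w :=
  strictMonoOn_sub_inv.injOn (zplus_pos _) hw (zplus_sub_inv _)

lemma image_sub_inv_Ioi : (fun w : ℝ => w - w⁻¹) '' Ioi 0 = univ :=
  eq_univ_of_forall fun k => ⟨zplus k, zplus_pos k, zplus_sub_inv k⟩

lemma image_neg_inv_Ioi : (fun w : ℝ => -w⁻¹) '' Ioi 0 = Iio 0 := by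
  ext z
  refine ⟨?_, fun hz => ⟨-z⁻¹, by simpa using hz, by simp⟩⟩
  rintro ⟨w, hw, rfl⟩
  simpa using hw.out

lemma hasDerivWithinAt_neg_inv {w : ℝ} (hw : w ∈ Ioi 0) :
    HasDerivWithinAt (fun w : ℝ => -w⁻¹) (w ^ 2)⁻¹ (Ioi 0) w := by
  simpa using ((hasDerivAt_inv hw.out.ne').fun_neg).hasDerivWithinAt

lemma hasDerivWithinAt_sub_inv {w : ℝ} (hw : w ∈ Ioi 0) :
    HasDerivWithinAt (fun w : ℝ => w - w⁻¹) (1 + (w ^ 2)⁻¹) (Ioi 0) w := by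
  simpa using ((hasDerivAt_id' w).fun_sub (hasDerivAt_inv hw.out.ne')).hasDerivWithinAt

lemma injOn_neg_inv : InjOn (fun w : ℝ => -w⁻¹) (Ioi 0) :=
  fun _ _ _ _ h => inv_injective (neg_injective h)

section Substitution

variable {F : Type*} [NormedAddCommGroup F] [NormedSpace ℝ F]

lemma integral_Iio_eq_integral_Ioi_neg_inv (g : ℝ → F) :
    ∫ z in Iio 0, g z = ∫ w in Ioi 0, (w ^ 2)⁻¹ • g (-w⁻¹) := by
  rw [← image_neg_inv_Ioi, integral_image_eq_integral_abs_deriv_smul measurableSet_Ioi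
    (fun _ => hasDerivWithinAt_neg_inv) injOn_neg_inv]
  simp only [abs_inv, abs_pow, sq_abs]

lemma integrableOn_Iio_iff_integrableOn_Ioi_neg_inv (g : ℝ → F) :
    IntegrableOn g (Iio 0) ↔ IntegrableOn (fun w => (w ^ 2)⁻¹ • g (-w⁻¹)) (Ioi 0) := by
  rw [← image_neg_inv_Ioi, integrableOn_image_iff_integrableOn_abs_deriv_smul measurableSet_Ioi
    (fun _ => hasDerivWithinAt_neg_inv) injOn_neg_inv]
  simp only [abs_inv, abs_pow, sq_abs]

lemma integral_eq_integral_Ioi_sub_inv (G : ℝ → F) :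
    ∫ k, G k = ∫ w in Ioi 0, (1 + (w ^ 2)⁻¹) • G (w - w⁻¹) := by
  rw [← setIntegral_univ, ← image_sub_inv_Ioi, integral_image_eq_integral_abs_deriv_smul
    measurableSet_Ioi (fun _ => hasDerivWithinAt_sub_inv) strictMonoOn_sub_inv.injOn]
  congr 1 with w
  rw [abs_of_pos (by positivity)]

theorem integral_eq_integral_comp_zplus_of_symm {g : ℝ → F} (hg : Integrable g)
    (hsym : ∀ᵐ z : ℝ, z ≠ 0 → g z = g (-z⁻¹)) :
    ∫ z, g z = ∫ k, g (zplus k) := by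
  have hsym_Ioi : ∀ᵐ w ∂volume.restrict (Ioi 0), (w ^ 2)⁻¹ • g (-w⁻¹) = (w ^ 2)⁻¹ • g w := by
    rw [ae_restrict_iff' measurableSet_Ioi]
    filter_upwards [hsym] with w hw hw0
    rw [hw hw0.out.ne']
  have hneg_int : IntegrableOn (fun w => (w ^ 2)⁻¹ • g w) (Ioi 0) :=
    ((integrableOn_Iio_iff_integrableOn_Ioi_neg_inv g).mp hg.integrableOn).congr_fun_ae hsym_Ioi
  calc ∫ z, g z = (∫ z in Iio 0, g z) + ∫ z in Ioi 0, g z := by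
        rw [← integral_Iic_eq_integral_Iio]
        exact (intervalIntegral.integral_Iic_add_Ioi hg.integrableOn hg.integrableOn).symm
    _ = ∫ w in Ioi 0, (1 + (w ^ 2)⁻¹) • g w := by
        rw [integral_Iio_eq_integral_Ioi_neg_inv g, integral_congr_ae hsym_Ioi,
          ← integral_add hneg_int hg.integrableOn]
        simp_rw [add_smul, one_smul, add_comm]
    _ = ∫ w in Ioi 0, (1 + (w ^ 2)⁻¹) • g (zplus (w - w⁻¹)) :=
        setIntegral_congr_fun measurableSet_Ioi fun w hw => by rw [zplus_sub_inv_of_pos hw]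
    _ = ∫ k, g (zplus k) := (integral_eq_integral_Ioi_sub_inv (fun k => g (zplus k))).symm

end Substitution

/-- For `f ∈ L¹(ℝ)` with `f(z) = f(-1/z)` a.e., and every `y ∈ ℝ`,
`∫_ℝ f(z) e^{−(i/2)(z − 1/z)y} dz = ∫_ℝ f(z₊(k)) e^{−(i/2)ky} dk`. -/
theorem symm_oscillatory_change_of_variables (f : ℝ → ℂ) (hf : Integrable f)
    (hsym : ∀ᵐ z : ℝ, z ≠ 0 → f z = f (-1 / z)) (y : ℝ) :
    (∫ z : ℝ, f z * Complex.exp (-(Complex.I / 2) * ((z : ℂ) - 1 / (z : ℂ)) * (y : ℂ))) =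
      ∫ k : ℝ, f (zplus k) * Complex.exp (-(Complex.I / 2) * (k : ℂ) * (y : ℂ)) := by
  set e : ℝ → ℂ := fun k => Complex.exp (-(Complex.I / 2) * (k : ℂ) * (y : ℂ))
  have he_norm (k : ℝ) : ‖e k‖ = 1 := by
    rw [← Complex.norm_exp_ofReal_mul_I (-(k * y / 2))]
    simp only [e]
    congr 2
    push_cast
    ring
  have hphase (z : ℝ) : Complex.exp (-(Complex.I / 2) * ((z : ℂ) - 1 / (z : ℂ)) * (y : ℂ)) =
      e (z - z⁻¹) := by
    simp [e, one_div]
  have hint : Integrable fun z => f z * e (z - z⁻¹) := by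
    have he : Continuous e := by fun_prop
    exact hf.mul_bdd (he.measurable.comp (by fun_prop)).aestronglyMeasurable
      (Eventually.of_forall fun z => (he_norm _).le)
  have hsym' : ∀ᵐ z : ℝ, z ≠ 0 → f z * e (z - z⁻¹) = f (-z⁻¹) * e (-z⁻¹ - (-z⁻¹)⁻¹) := by
    filter_upwards [hsym] with z hz hz0
    rw [hz hz0, neg_div, one_div, inv_neg, inv_inv, sub_neg_eq_add, neg_add_eq_sub]
  simp_rw [hphase, integral_eq_integral_comp_zplus_of_symm hint hsym', zplus_sub_inv, e]
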